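/- For any step-up test and any true null index i with p_i independent of the remaining p-values and P(p_i ≤ x) ≤ x, one has E[1{p_i ≤ α_{R(p)}}/max(R(p),1)] ≤ E[α_{R(p^{(i)})}/R(p^{(i)})]; in particular, for BH critical values α_j = jα/m this equals at most α/m, with equality when p_i is uniform on [0,1]. -/

import Mathlib

open MeasureTheory ProbabilityTheory Finset
open scoped Classical
noncomputable section

/-- `#{i : p i ≤ t}`, i.e. `m·F̂_m(t)`. -/
def countLE {m : ℕ} (p : Fin m → ℝ) (t : ℝ) : ℕ :=
  (Finset.univ.filter (fun i => p i ≤ t)).card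

/-- The `i`-th order statistic `p_{i:m}` (for `1 ≤ i ≤ m`), characterized by
`p_{i:m} ≤ t ↔ i ≤ #{k : p k ≤ t}`. -/
def orderStat {m : ℕ} (p : Fin m → ℝ) (i : ℕ) : ℝ :=
  sInf {t | i ≤ countLE p t}

/-- Step-up rejection number `R = max {j : p_{j:m} ≤ α_j}` (`max ∅ = 0`). -/
def suR {m : ℕ} (α : ℕ → ℝ) (p : Fin m → ℝ) : ℕ :=
  (((Finset.range (m+1)).filter (fun j => 1 ≤ j ∧ orderStat p j ≤ α j)).max).unbotD 0

/-- Step-down rejection number `R = max {j : p_{i:m} ≤ α_i for all i ≤ j}`. -/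
def sdR {m : ℕ} (α : ℕ → ℝ) (p : Fin m → ℝ) : ℕ :=
  (((Finset.range (m+1)).filter
    (fun j => ∀ i ∈ Finset.Icc 1 j, orderStat p i ≤ α i)).max).unbotD 0

/-- FDR `= E[V / max(R,1)]` for rejection number `R` and rejection rule `rej`. -/
def FDR {Ω : Type*} [MeasurableSpace Ω] (μ : Measure Ω) {m : ℕ}
    (p : Ω → Fin m → ℝ) (I0 : Finset (Fin m))
    (R : (Fin m → ℝ) → ℕ) (rej : (Fin m → ℝ) → Fin m → Prop) : ℝ :=
  ∫ ω, ((I0.filter (fun i => rej (p ω) i)).card : ℝ) / (max (R (p ω)) 1 : ℕ) ∂μ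

/-- FDR of the step-up test with critical values `α`. -/
def suFDR {Ω : Type*} [MeasurableSpace Ω] (μ : Measure Ω) {m : ℕ}
    (α : ℕ → ℝ) (p : Ω → Fin m → ℝ) (I0 : Finset (Fin m)) : ℝ :=
  FDR μ p I0 (suR α) (fun q i => q i ≤ α (suR α q))

/-- FDR of the step-down test with critical values `α`
(rejecting the hypotheses belonging to `p_{i:m}`, `i ≤ R`). -/
def sdFDR {Ω : Type*} [MeasurableSpace Ω] (μ : Measure Ω) {m : ℕ}
    (α : ℕ → ℝ) (p : Ω → Fin m → ℝ) (I0 : Finset (Fin m)) : ℝ :=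
  FDR μ p I0 (sdR α) (fun q i => 1 ≤ sdR α q ∧ q i ≤ orderStat q (sdR α q))

/-- Benjamini–Hochberg critical values `b_j = jα/m`. -/
def bh (m : ℕ) (α : ℝ) (j : ℕ) : ℝ := j * α / m

/-- The uniform distribution on `[0,1]`. -/
def unif01 : Measure ℝ := volume.restrict (Set.Icc 0 1)

/-!
Write `p⁽ⁱ⁾` for `p` with its `i`-th coordinate set to `0`, and `R' = R(p⁽ⁱ⁾) ≥ 1`.
Lowering p-values can only increase the number of step-up rejections, and on `{p_i ≤ α_{R'}}`
raising `p_i` from `0` back to its value keeps the same `R'` order statistics below their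
critical values, so there `R(p) = R'`. Hence, as `p_i ≥ 0` almost surely (super-uniformity at `0`),
`1{p_i ≤ α_R} / max(R, 1) = 1{p_i ≤ α_{R'}} / R'` almost surely. Since `R'` is a function of the
other p-values, independence lets us integrate over `p_i` first, which turns the integrand into
`P(p_i ≤ α_{R'}) / R'`: at most `α_{R'} / R'`, with equality for uniform `p_i`; for
Benjamini–Hochberg, `α_{R'} / R' = α / m`.
-/

section StepUp

variable {m : ℕ}

theorem monotone_countLE (p : Fin m → ℝ) : Monotone (countLE p) :=
  fun _ _ hst => card_le_card fun _ hk => by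
    simp only [mem_filter, mem_univ, true_and] at hk ⊢
    exact hk.trans hst

theorem countLE_anti {p q : Fin m → ℝ} (hpq : p ≤ q) (t : ℝ) :
    countLE q t ≤ countLE p t :=
  card_le_card fun k hk => by
    simp only [mem_filter, mem_univ, true_and] at hk ⊢
    exact (hpq k).trans hk

theorem countLE_eq_sum_indicator (p : Fin m → ℝ) (t : ℝ) :
    countLE p t = ∑ k, (Set.Ici (p k)).indicator 1 t := by
  rw [countLE, card_filter]
  simp only [Set.indicator_apply, Set.mem_Ici, Pi.one_apply]

theorem upperSemicontinuous_countLE (p : Fin m → ℝ) : UpperSemicontinuous (countLE p) := by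
  simp_rw [funext (countLE_eq_sum_indicator p)]
  exact upperSemicontinuous_sum fun k _ =>
    isClosed_Ici.upperSemicontinuous_indicator zero_le_one

theorem orderStat_le_iff (p : Fin m → ℝ) {j : ℕ} (hj1 : 1 ≤ j) (hjm : j ≤ m) (t : ℝ) :
    orderStat p j ≤ t ↔ j ≤ countLE p t := by
  have hbdd : BddBelow {t | j ≤ countLE p t} := by
    obtain ⟨b, hb⟩ := (Set.finite_range p).bddBelow
    refine ⟨b, fun t ht => ?_⟩
    obtain ⟨k, hk⟩ : (univ.filter fun k => p k ≤ t).Nonempty :=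
      card_pos.1 (lt_of_lt_of_le hj1 ht)
    exact (hb ⟨k, rfl⟩).trans (mem_filter.1 hk).2
  have hne : {t | j ≤ countLE p t}.Nonempty := by
    obtain ⟨b, hb⟩ := (Set.finite_range p).bddAbove
    refine ⟨b, ?_⟩
    simpa [countLE, filter_true_of_mem fun k _ => hb ⟨k, rfl⟩] using hjm
  refine ⟨fun h => ?_, fun h => csInf_le hbdd h⟩
  have hmem := ((upperSemicontinuous_countLE p).isClosed_preimage j).csInf_mem hne hbdd
  exact le_trans hmem (monotone_countLE p h)

theorem le_suR_iff (α : ℕ → ℝ) (q : Fin m → ℝ) (n : ℕ) :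
    n ≤ suR α q ↔ ∃ j, n ≤ j ∧ j ≤ m ∧ j ≤ countLE q (α j) := by
  rcases Nat.eq_zero_or_pos n with rfl | hn
  · exact ⟨fun _ => ⟨0, le_rfl, Nat.zero_le m, Nat.zero_le _⟩, fun _ => Nat.zero_le _⟩
  have hmem : ∀ j, j ∈ (range (m + 1)).filter (fun j => 1 ≤ j ∧ orderStat q j ≤ α j) ↔
      1 ≤ j ∧ j ≤ m ∧ j ≤ countLE q (α j) := fun j => by
    simp only [mem_filter, mem_range, Nat.lt_succ_iff]
    exact ⟨fun ⟨hjm, hj1, h⟩ => ⟨hj1, hjm, (orderStat_le_iff q hj1 hjm _).1 h⟩,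
      fun ⟨hj1, hjm, h⟩ => ⟨hjm, hj1, (orderStat_le_iff q hj1 hjm _).2 h⟩⟩
  rw [suR, ← not_lt, WithBot.unbotD_lt_iff (fun _ => hn), not_lt, max_eq_sup_coe,
    Finset.le_sup_iff (WithBot.bot_lt_coe n)]
  simp only [WithBot.coe_le_coe, hmem]
  exact ⟨fun ⟨j, ⟨_, hjm, hj⟩, hnj⟩ => ⟨j, hnj, hjm, hj⟩,
    fun ⟨j, hnj, hjm, hj⟩ => ⟨j, ⟨hn.trans_le hnj, hjm, hj⟩, hnj⟩⟩

theorem suR_le (α : ℕ → ℝ) (q : Fin m → ℝ) : suR α q ≤ m := by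
  obtain ⟨j, hj, hjm, -⟩ := (le_suR_iff α q _).1 le_rfl
  exact hj.trans hjm

theorem antitone_suR (α : ℕ → ℝ) : Antitone (suR α : (Fin m → ℝ) → ℕ) := fun p q hpq => by
  obtain ⟨j, hj, hjm, hc⟩ := (le_suR_iff α q _).1 le_rfl
  exact (le_suR_iff α p _).2 ⟨j, hj, hjm, hc.trans (countLE_anti hpq _)⟩

theorem one_le_suR_update_zero {α : ℕ → ℝ} (hα1 : 0 < α 1) (q : Fin m → ℝ) (i : Fin m) :
    1 ≤ suR α (Function.update q i 0) :=
  (le_suR_iff α _ 1).2 ⟨1, le_rfl, i.pos, card_pos.2 ⟨i, by simp [hα1.le]⟩⟩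

theorem suR_update_zero_le {α : ℕ → ℝ} (hmono : Monotone α) (q : Fin m → ℝ) (i : Fin m)
    (h : q i ≤ α (suR α (Function.update q i 0))) :
    suR α (Function.update q i 0) ≤ suR α q := by
  obtain ⟨j, hj, hjm, hc⟩ := (le_suR_iff α _ _).1 le_rfl
  refine hj.trans ((le_suR_iff α q j).2 ⟨j, le_rfl, hjm, hc.trans (card_le_card fun k hk => ?_)⟩)
  simp only [mem_filter, mem_univ, true_and] at hk ⊢
  rcases eq_or_ne k i with rfl | hki
  · exact h.trans (hmono hj)
  · simpa [hki] using hk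

theorem ite_div_max_suR_eq {α : ℕ → ℝ} (hα1 : 0 < α 1) (hmono : Monotone α)
    (q : Fin m → ℝ) (i : Fin m) (h0 : 0 ≤ q i) :
    (if q i ≤ α (suR α q) then (1:ℝ) else 0) / (max (suR α q) 1 : ℕ)
      = (if q i ≤ α (suR α (Function.update q i 0)) then (1:ℝ) else 0)
        / (suR α (Function.update q i 0) : ℕ) := by
  have hle : suR α q ≤ suR α (Function.update q i 0) :=
    antitone_suR α (update_le_self_iff.2 h0)
  by_cases h : q i ≤ α (suR α (Function.update q i 0))
  · rw [hle.antisymm (suR_update_zero_le hmono q i h),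
      max_eq_left (one_le_suR_update_zero hα1 q i)]
  · rw [if_neg h, if_neg fun h' => h (h'.trans (hmono hle)), zero_div, zero_div]

theorem measurable_countLE (t : ℝ) : Measurable fun q : Fin m → ℝ => countLE q t := by
  simp only [countLE, card_filter]
  exact Finset.measurable_sum _ fun k _ =>
    Measurable.ite (measurableSet_le (measurable_pi_apply k) measurable_const)
      measurable_const measurable_const

theorem measurable_suR (α : ℕ → ℝ) : Measurable (suR α : (Fin m → ℝ) → ℕ) := by
  refine measurable_of_Ici fun n => ?_
  have : suR α ⁻¹' Set.Ici n = ⋃ j ∈ Set.Icc n m, {q : Fin m → ℝ | j ≤ countLE q (α j)} := by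
    ext q
    simp [le_suR_iff, and_assoc]
  rw [this]
  exact MeasurableSet.biUnion (Set.to_countable _) fun j _ =>
    measurableSet_le measurable_const (measurable_countLE _)

end StepUp

section Probability

variable {Ω : Type*} [MeasurableSpace Ω] {μ : Measure Ω}

def IsSuperUniform (μ : Measure Ω) (X : Ω → ℝ) : Prop :=
  ∀ x ∈ Set.Icc (0:ℝ) 1, μ {ω | X ω ≤ x} ≤ ENNReal.ofReal x

theorem ProbabilityTheory.IndepFun.integral_comp_eq_integral_integral
    {α β : Type*} [MeasurableSpace α] [MeasurableSpace β] [IsFiniteMeasure μ]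
    {X : Ω → α} {Y : Ω → β} (hXY : IndepFun X Y μ) (hX : Measurable X) (hY : Measurable Y)
    {f : α × β → ℝ} (hf : StronglyMeasurable f)
    (hfi : Integrable f ((μ.map X).prod (μ.map Y))) :
    ∫ ω, f (X ω, Y ω) ∂μ = ∫ ω, ∫ ω', f (X ω, Y ω') ∂μ ∂μ := by
  have hmap : μ.map (fun ω => (X ω, Y ω)) = (μ.map X).prod (μ.map Y) :=
    (indepFun_iff_map_prod_eq_prod_map_map hX.aemeasurable hY.aemeasurable).1 hXY
  calc ∫ ω, f (X ω, Y ω) ∂μ = ∫ z, f z ∂((μ.map X).prod (μ.map Y)) := by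
        rw [← hmap, integral_map (hX.prodMk hY).aemeasurable hf.aestronglyMeasurable]
    _ = ∫ x, ∫ y, f (x, y) ∂(μ.map Y) ∂(μ.map X) := integral_prod f hfi
    _ = ∫ ω, ∫ ω', f (X ω, Y ω') ∂μ ∂μ := by
        rw [integral_map hX.aemeasurable hfi.integral_prod_left.aestronglyMeasurable]
        congr with ω
        exact integral_map hY.aemeasurable
          (hf.comp_measurable measurable_prodMk_left).aestronglyMeasurable

theorem ProbabilityTheory.IndepFun.indepFun_update {ι β : Type*} [DecidableEq ι]
    [MeasurableSpace β] {p : Ω → ι → β} {i : ι} (c : β)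
    (hind : IndepFun (fun ω => p ω i) (fun ω (k : {k // k ≠ i}) => p ω k) μ) :
    IndepFun (fun ω => p ω i) (fun ω => Function.update (p ω) i c) μ := by
  have hext : Measurable fun (z : {k // k ≠ i} → β) (k : ι) =>
      if h : k = i then c else z ⟨k, h⟩ := by
    refine measurable_pi_lambda _ fun k => ?_
    by_cases h : k = i
    · simp [h]
    · simpa [h] using measurable_pi_apply (⟨k, h⟩ : {k // k ≠ i})
  convert hind.comp measurable_id hext using 1
  · rfl
  funext ω k
  by_cases h : k = i <;> simp [h]

theorem integral_ite_le_div {X : Ω → ℝ} (hX : Measurable X) (c r : ℝ) :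
    ∫ ω, (if X ω ≤ c then (1:ℝ) else 0) / r ∂μ = μ.real {ω | X ω ≤ c} / r := by
  rw [integral_div, ← integral_indicator_one (measurableSet_le hX measurable_const)]
  simp only [Set.indicator_apply, Set.mem_ofPred_eq, Pi.one_apply]

theorem IsSuperUniform.measureReal_setOf_le_le [IsProbabilityMeasure μ] {X : Ω → ℝ}
    (hX : IsSuperUniform μ X) {c : ℝ} (hc : 0 ≤ c) :
    μ.real {ω | X ω ≤ c} ≤ c := by
  rcases le_or_gt c 1 with hc1 | hc1
  · exact ENNReal.toReal_le_of_le_ofReal hc (hX c ⟨hc, hc1⟩)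
  · exact measureReal_le_one.trans hc1.le

theorem IsSuperUniform.ae_nonneg {X : Ω → ℝ} (hX : IsSuperUniform μ X) :
    ∀ᵐ ω ∂μ, 0 ≤ X ω := by
  have hnull : μ {ω | X ω ≤ 0} = 0 := by simpa using hX 0 ⟨le_rfl, zero_le_one⟩
  exact ae_iff.2 (measure_mono_null (fun ω hω => (lt_of_not_ge hω).le) hnull)

theorem unif01_real_Iic {c : ℝ} (hc : c ∈ Set.Icc (0:ℝ) 1) : unif01.real (Set.Iic c) = c := by
  have hset : Set.Iic c ∩ Set.Icc 0 1 = Set.Icc 0 c := by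
    ext x
    simp only [Set.mem_inter_iff, Set.mem_Iic, Set.mem_Icc]
    exact ⟨fun ⟨hxc, h0x, _⟩ => ⟨h0x, hxc⟩, fun ⟨h0x, hxc⟩ => ⟨hxc, h0x, hxc.trans hc.2⟩⟩
  rw [unif01, measureReal_restrict_apply measurableSet_Iic, hset,
    Real.volume_real_Icc_of_le hc.1, sub_zero]

theorem measureReal_setOf_le_eq_of_map_eq_unif01 {X : Ω → ℝ} (hX : Measurable X)
    (hunif : μ.map X = unif01) {c : ℝ} (hc : c ∈ Set.Icc (0:ℝ) 1) : μ.real {ω | X ω ≤ c} = c := by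
  calc μ.real {ω | X ω ≤ c} = (μ.map X).real (Set.Iic c) :=
        (map_measureReal_apply hX measurableSet_Iic).symm
    _ = c := by rw [hunif, unif01_real_Iic hc]

theorem integrable_comp_of_forall_le [IsFiniteMeasure μ] {N : Ω → ℕ} (hN : Measurable N) {n : ℕ}
    (hNn : ∀ ω, N ω ≤ n) (f : ℕ → ℝ) : Integrable (fun ω => f (N ω)) μ := by
  refine .of_bound (measurable_from_top.comp hN).aestronglyMeasurable
    (∑ k ∈ range (n + 1), ‖f k‖) (.of_forall fun ω => ?_)
  exact single_le_sum (fun k _ => norm_nonneg (f k)) (mem_range.2 (Nat.lt_succ_of_le (hNn ω)))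

theorem integral_ite_div_max_suR_eq [IsProbabilityMeasure μ] {m : ℕ} {α : ℕ → ℝ}
    (hα1 : 0 < α 1) (hmono : Monotone α) {p : Ω → Fin m → ℝ}
    (hmeas : ∀ k, Measurable fun ω => p ω k) (i : Fin m)
    (hind : IndepFun (fun ω => p ω i) (fun ω => Function.update (p ω) i 0) μ)
    (hpos : ∀ᵐ ω ∂μ, 0 ≤ p ω i) :
    ∫ ω, (if p ω i ≤ α (suR α (p ω)) then (1:ℝ) else 0) / (max (suR α (p ω)) 1 : ℕ) ∂μ
      = ∫ ω, μ.real {ω' | p ω' i ≤ α (suR α (Function.update (p ω) i 0))}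
          / (suR α (Function.update (p ω) i 0) : ℕ) ∂μ := by
  have hY : Measurable fun ω => Function.update (p ω) i 0 := by fun_prop
  set g : (Fin m → ℝ) × ℝ → ℝ := fun z =>
    (if z.2 ≤ α (suR α z.1) then (1:ℝ) else 0) / (suR α z.1 : ℕ) with hg_def
  have hg : Measurable g := by
    have hR : Measurable fun z : (Fin m → ℝ) × ℝ => suR α z.1 :=
      (measurable_suR α).comp measurable_fst
    exact (Measurable.ite (measurableSet_le measurable_snd (measurable_from_top.comp hR))
      measurable_const measurable_const).div (measurable_from_top.comp hR)
  have hgi : Integrable g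
      ((μ.map fun ω => Function.update (p ω) i 0).prod (μ.map fun ω => p ω i)) := by
    refine .of_bound hg.aestronglyMeasurable 1 (.of_forall fun z => ?_)
    simp only [hg_def]
    split_ifs <;> simp [Nat.cast_inv_le_one]
  calc _ = ∫ ω, g (Function.update (p ω) i 0, p ω i) ∂μ :=
        integral_congr_ae (hpos.mono fun ω h => ite_div_max_suR_eq hα1 hmono (p ω) i h)
    _ = ∫ ω, ∫ ω', g (Function.update (p ω) i 0, p ω' i) ∂μ ∂μ :=
        hind.symm.integral_comp_eq_integral_integral hY (hmeas i) hg.stronglyMeasurable hgi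
    _ = _ := by
        congr with ω
        exact integral_ite_le_div (hmeas i) (α (suR α (Function.update (p ω) i 0)))
          (suR α (Function.update (p ω) i 0) : ℕ)

end Probability

theorem bh_div_natCast (m : ℕ) (a : ℝ) {n : ℕ} (hn : n ≠ 0) : bh m a n / n = a / m := by
  have : (n : ℝ) ≠ 0 := Nat.cast_ne_zero.2 hn
  rw [bh]
  field_simp

theorem bh_mem_Icc {m n : ℕ} (hnm : n ≤ m) {a : ℝ} (ha : a ∈ Set.Icc (0:ℝ) 1) :
    bh m a n ∈ Set.Icc (0:ℝ) 1 :=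
  ⟨by unfold bh; have := ha.1; positivity,
    div_le_one_of_le₀ ((mul_le_of_le_one_right (Nat.cast_nonneg n) ha.2).trans
      (by exact_mod_cast hnm)) (Nat.cast_nonneg m)⟩

theorem su_single_coordinate_lemma_general
    {Ω : Type*} [MeasurableSpace Ω] (μ : Measure Ω) [IsProbabilityMeasure μ]
    (m : ℕ) (α : ℕ → ℝ)
    (hα1 : 0 < α 1) (hmono : Monotone α)
    (p : Ω → Fin m → ℝ)
    (hmeas : ∀ k, Measurable (fun ω => p ω k))
    (i : Fin m)
    -- `p_i` is independent of the remaining p-values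
    (hind : IndepFun (fun ω => p ω i) (fun ω (k : {k // k ≠ i}) => p ω k) μ)
    -- and stochastically larger than (or equal to) uniform
    (hstoch : ∀ x ∈ Set.Icc (0:ℝ) 1, μ {ω | p ω i ≤ x} ≤ ENNReal.ofReal x) :
    (∫ ω, (if p ω i ≤ α (suR α (p ω)) then (1:ℝ) else 0)
        / (max (suR α (p ω)) 1 : ℕ) ∂μ)
      ≤ ∫ ω, α (suR α (Function.update (p ω) i 0))
        / (suR α (Function.update (p ω) i 0) : ℕ) ∂μ ∧
    (∀ a : ℝ, a ∈ Set.Ioo (0:ℝ) 1 → α = bh m a →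
      ((∫ ω, (if p ω i ≤ α (suR α (p ω)) then (1:ℝ) else 0)
          / (max (suR α (p ω)) 1 : ℕ) ∂μ) ≤ a / m ∧
       (Measure.map (fun ω => p ω i) μ = unif01 →
        (∫ ω, (if p ω i ≤ α (suR α (p ω)) then (1:ℝ) else 0)
          / (max (suR α (p ω)) 1 : ℕ) ∂μ) = a / m))) := by
  have hR : Measurable fun ω => suR α (Function.update (p ω) i 0) :=
    (measurable_suR α).comp (by fun_prop)
  have hR1 (ω : Ω) : 1 ≤ suR α (Function.update (p ω) i 0) := one_le_suR_update_zero hα1 _ i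
  have hfubini := integral_ite_div_max_suR_eq hα1 hmono hmeas i (hind.indepFun_update 0)
    (IsSuperUniform.ae_nonneg hstoch)
  have hbound : (∫ ω, (if p ω i ≤ α (suR α (p ω)) then (1:ℝ) else 0)
      / (max (suR α (p ω)) 1 : ℕ) ∂μ) ≤ ∫ ω, α (suR α (Function.update (p ω) i 0))
        / (suR α (Function.update (p ω) i 0) : ℕ) ∂μ := by
    rw [hfubini]
    refine integral_mono_of_nonneg (.of_forall fun ω => by positivity)
      (integrable_comp_of_forall_le hR (fun ω => suR_le α _) fun n => α n / n) (.of_forall fun ω => ?_)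
    exact div_le_div_of_nonneg_right (IsSuperUniform.measureReal_setOf_le_le hstoch
      (hα1.le.trans (hmono (hR1 ω)))) (Nat.cast_nonneg _)
  refine ⟨hbound, fun a ha hα => ?_⟩
  subst hα
  have hbh (ω : Ω) := bh_div_natCast m a (Nat.one_le_iff_ne_zero.1 (hR1 ω))
  have hRHS : ∫ ω, bh m a (suR (bh m a) (Function.update (p ω) i 0))
      / (suR (bh m a) (Function.update (p ω) i 0) : ℕ) ∂μ = a / m := by
    simp [hbh]
  refine ⟨hRHS ▸ hbound, fun hunif => ?_⟩
  rw [hfubini, ← hRHS]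
  congr with ω
  rw [measureReal_setOf_le_eq_of_map_eq_unif01 (hmeas i) hunif
    (bh_mem_Icc (suR_le _ _) (Set.Ioo_subset_Icc_self ha))]

/-- The single-coordinate (Fubini) lemma: for a step-up test and
a true null `i` whose p-value is independent of the others and stochastically
larger than uniform,
`E[1{p_i ≤ α_{R(p)}}/max(R(p),1)] ≤ E[α_{R(p^{(i)})}/R(p^{(i)})]`;
for BH critical values `α_j = jα/m` the right side is `α/m`, with equality on
the left when `p_i` is uniform on `[0,1]`. -/
theorem su_single_coordinate_lemma
    {Ω : Type*} [MeasurableSpace Ω] (μ : Measure Ω) [IsProbabilityMeasure μ]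
    (m : ℕ) (hm : 1 ≤ m) (α : ℕ → ℝ)
    (hα0 : α 0 = 0) (hα1 : 0 < α 1) (hmono : Monotone α) (hαm : α m < 1)
    (p : Ω → Fin m → ℝ)
    (hmeas : ∀ k, Measurable (fun ω => p ω k))
    (hrange : ∀ ω k, p ω k ∈ Set.Icc (0:ℝ) 1)
    (i : Fin m)
    -- `p_i` is independent of the remaining p-values
    (hind : IndepFun (fun ω => p ω i) (fun ω (k : {k // k ≠ i}) => p ω k) μ)
    -- and stochastically larger than (or equal to) uniform
    (hstoch : ∀ x ∈ Set.Icc (0:ℝ) 1, μ {ω | p ω i ≤ x} ≤ ENNReal.ofReal x) :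
    (∫ ω, (if p ω i ≤ α (suR α (p ω)) then (1:ℝ) else 0)
        / (max (suR α (p ω)) 1 : ℕ) ∂μ)
      ≤ ∫ ω, α (suR α (Function.update (p ω) i 0))
        / (suR α (Function.update (p ω) i 0) : ℕ) ∂μ ∧
    (∀ a : ℝ, a ∈ Set.Ioo (0:ℝ) 1 → α = bh m a →
      ((∫ ω, (if p ω i ≤ α (suR α (p ω)) then (1:ℝ) else 0)
          / (max (suR α (p ω)) 1 : ℕ) ∂μ) ≤ a / m ∧
       (Measure.map (fun ω => p ω i) μ = unif01 →
        (∫ ω, (if p ω i ≤ α (suR α (p ω)) then (1:ℝ) else 0)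
          / (max (suR α (p ω)) 1 : ℕ) ∂μ) = a / m))) :=
  su_single_coordinate_lemma_general μ m α hα1 hmono p hmeas i hind hstoch
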